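/- Let G be an undirected graph whose identity labeling on {1,...,n} corresponds to a valid FIN numbering, and define p_FIN(v) = min{u ∈ N(v) : u > v} (or ∞ if no neighbor exceeds v). Consider the tree T_FIN on vertex set {1,...,n} ∪ {∞} rooted at ∞ with edges {p_FIN(v), v} for all v. Then G has no cross edges with respect to T_FIN: for every edge {u,w} ∈ E, either u is an ancestor of w in T_FIN or w is an ancestor of u. -/

import Mathlib

open Classical

/-- `adj` is (the adjacency relation of) a simple undirected graph on vertex set `{1,…,n}`. -/
def IsGraphOn (n : ℕ) (adj : ℕ → ℕ → Prop) : Prop :=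
  Symmetric adj ∧ ∀ u v, adj u v → 1 ≤ u ∧ u ≤ n ∧ 1 ≤ v ∧ v ≤ n ∧ u ≠ v

/-- `p(v)`: the largest neighbour of `v` that is smaller than `v`, and `0` if none exists
(`sSup ∅ = 0` in `ℕ`). -/
noncomputable def par (adj : ℕ → ℕ → Prop) (v : ℕ) : ℕ :=
  sSup {u | adj u v ∧ u < v}

/-- `(v, {u,w})` is a conflicting pair: `{u,w}` is an edge and `p(v) < u < v < w`. -/
def Conflict (adj : ℕ → ℕ → Prop) (v u w : ℕ) : Prop :=
  adj u w ∧ par adj v < u ∧ u < v ∧ v < w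

/-- One step of a (nondeterministic) depth-first search.  The state consists of the list of
already discovered vertices, in order of discovery and together with the recorded (possibly
virtual) parent from which each was discovered, and of the stack of active vertices
(the white path, top first). -/
inductive DFSStep (n : ℕ) (adj : ℕ → ℕ → Prop) :
    List (ℕ × ℕ) × List ℕ → List (ℕ × ℕ) × List ℕ → Prop
  | root (v : ℕ) (order : List (ℕ × ℕ)) (hv1 : 1 ≤ v) (hv2 : v ≤ n)
      (hnd : v ∉ order.map Prod.fst) :
      DFSStep n adj (order, []) (order ++ [(v, 0)], [v])
  | descend (v t : ℕ) (order : List (ℕ × ℕ)) (stack : List ℕ)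
      (hadj : adj t v) (hnd : v ∉ order.map Prod.fst) :
      DFSStep n adj (order, t :: stack) (order ++ [(v, t)], v :: t :: stack)
  | backtrack (t : ℕ) (order : List (ℕ × ℕ)) (stack : List ℕ)
      (hall : ∀ u, adj t u → u ∈ order.map Prod.fst) :
      DFSStep n adj (order, t :: stack) (order, stack)

/-- A complete DFS run discovering the vertices in the order given by the list `order`. -/
def DFSRun (n : ℕ) (adj : ℕ → ℕ → Prop) (order : List (ℕ × ℕ)) : Prop :=
  Relation.ReflTransGen (DFSStep n adj) ([], []) (order, [])

/-- The labelling `f` is a valid DFS numbering of the graph: some DFS run discovers the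
vertices in the order of increasing labels `1, 2, …, n`. -/
def ValidDFSLabel (n : ℕ) (adj : ℕ → ℕ → Prop) (f : ℕ → ℕ) : Prop :=
  ∃ order, DFSRun n adj order ∧ (order.map Prod.fst).map f = List.range' 1 n

/-- The identity labelling on `{1,…,n}` is a valid DFS numbering of the graph. -/
def ValidDFS (n : ℕ) (adj : ℕ → ℕ → Prop) : Prop :=
  ValidDFSLabel n adj id

/-- The graph is connected (on its vertex set `{1,…,n}`). -/
def ConnOn (n : ℕ) (adj : ℕ → ℕ → Prop) : Prop :=
  ∀ u v, 1 ≤ u → u ≤ n → 1 ≤ v → v ≤ n → Relation.ReflTransGen adj u v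

/-- The degree of a vertex. -/
noncomputable def degree (adj : ℕ → ℕ → Prop) (v : ℕ) : ℕ :=
  Set.ncard {u | adj u v}

/-- The size `|E △ E'|` of the symmetric difference of the edge sets of two graphs
(given by symmetric adjacency relations). -/
noncomputable def edgeDiff (a b : ℕ → ℕ → Prop) : ℕ :=
  Set.ncard {p : ℕ × ℕ | p.1 < p.2 ∧ ¬(a p.1 p.2 ↔ b p.1 p.2)}

/-- One step of a depth-first search that also records the finishing order.  The state is
`(disc, fin, stack)`: discovered vertices in discovery order, finished vertices in
finishing order, and the stack of active vertices (top first). -/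
inductive FINStep (n : ℕ) (adj : ℕ → ℕ → Prop) :
    List ℕ × List ℕ × List ℕ → List ℕ × List ℕ × List ℕ → Prop
  | root (v : ℕ) (disc fin : List ℕ) (hv1 : 1 ≤ v) (hv2 : v ≤ n) (hnd : v ∉ disc) :
      FINStep n adj (disc, fin, []) (disc ++ [v], fin, [v])
  | descend (v t : ℕ) (disc fin : List ℕ) (stack : List ℕ)
      (hadj : adj t v) (hnd : v ∉ disc) :
      FINStep n adj (disc, fin, t :: stack) (disc ++ [v], fin, v :: t :: stack)
  | backtrack (t : ℕ) (disc fin : List ℕ) (stack : List ℕ)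
      (hall : ∀ u, adj t u → u ∈ disc) :
      FINStep n adj (disc, fin, t :: stack) (disc, fin ++ [t], stack)

/-- The identity labelling on `{1,…,n}` is a valid FIN numbering: some DFS run finishes
the vertices exactly in the order `1, 2, …, n`. -/
def ValidFIN (n : ℕ) (adj : ℕ → ℕ → Prop) : Prop :=
  ∃ disc, Relation.ReflTransGen (FINStep n adj)
    (([], [], []) : List ℕ × List ℕ × List ℕ) (disc, List.range' 1 n, [])

/-- `p_FIN(v)`: the smallest neighbour of `v` larger than `v`, with the sentinel value
`n + 1` (playing the role of `∞`) if no neighbour of `v` exceeds `v`. -/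
noncomputable def parFIN (n : ℕ) (adj : ℕ → ℕ → Prop) (v : ℕ) : ℕ :=
  if ∃ u, adj u v ∧ v < u then sInf {u | adj u v ∧ v < u} else n + 1

/-- A FIN-conflicting pair `(v, {u,w})`: `{u,w} ∈ E` and `w < v < u < p_FIN(v)`. -/
def FINConflict (n : ℕ) (adj : ℕ → ℕ → Prop) (v u w : ℕ) : Prop :=
  adj u w ∧ w < v ∧ v < u ∧ u < parFIN n adj v

/-
Because the labels are the finishing times, at the moment `v` finishes every `w < v` is
already finished, so all neighbours of `w` have been discovered; a discovered neighbour `u > v`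
is still unfinished, hence lies on the DFS stack below `v`.  The vertex `t` directly below `v`
is a neighbour of `v` finishing after `v` and no later than `u`, so `p_FIN(v) ≤ t ≤ u`: there
are no FIN-conflicting pairs.  Consequently, for an edge `{u, w}` with `w < u`, the chain
`w, p_FIN(w), p_FIN(p_FIN(w)), …` strictly increases and never jumps over `u`, so it reaches `u`.
-/

section FINRun

variable {n : ℕ} {adj : ℕ → ℕ → Prop}

structure FINInvariant (adj : ℕ → ℕ → Prop) (st : List ℕ × List ℕ × List ℕ) : Prop where
  adj_mem_disc_of_mem_fin : ∀ x ∈ st.2.1, ∀ y, adj x y → y ∈ st.1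
  mem_fin_or_mem_stack : ∀ x ∈ st.1, x ∈ st.2.1 ∨ x ∈ st.2.2
  isChain_stack : st.2.2.IsChain (fun a b => adj b a)

theorem FINInvariant.step {a b : List ℕ × List ℕ × List ℕ} (h : FINStep n adj a b)
    (hI : FINInvariant adj a) : FINInvariant adj b := by
  obtain ⟨hfin, hdisc, hchain⟩ := hI
  cases h with
  | root v disc fin =>
    refine ⟨fun x hx y hxy => List.mem_append_left _ (hfin x hx y hxy), ?_, .singleton v⟩
    simp only [List.mem_append, List.mem_singleton, List.not_mem_nil, or_false] at hdisc ⊢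
    rintro x (hx | rfl)
    · exact Or.inl (hdisc x hx)
    · exact Or.inr rfl
  | descend v t disc fin stack hadj =>
    refine ⟨fun x hx y hxy => List.mem_append_left _ (hfin x hx y hxy), ?_, hchain.cons_cons hadj⟩
    simp only [List.mem_append, List.mem_cons, List.not_mem_nil, or_false] at hdisc ⊢
    rintro x (hx | rfl)
    · exact (hdisc x hx).imp_right Or.inr
    · exact Or.inr (Or.inl rfl)
  | backtrack t disc fin stack hall =>
    refine ⟨?_, ?_, hchain.tail⟩
    · simp only [List.mem_append, List.mem_singleton]
      rintro x (hx | rfl)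
      exacts [hfin x hx, hall]
    · simp only [List.mem_append, List.mem_cons, List.not_mem_nil, or_false] at hdisc ⊢
      exact fun x hx => or_assoc.2 (hdisc x hx)

theorem FINInvariant.of_reflTransGen {b : List ℕ × List ℕ × List ℕ}
    (h : Relation.ReflTransGen (FINStep n adj) ([], [], []) b) : FINInvariant adj b := by
  induction h with
  | refl => exact ⟨by simp, by simp, .nil⟩
  | tail _ hstep ih => exact ih.step hstep

/-- Every vertex on the stack is finished, in stack order, before the run empties the stack. -/
theorem exists_stack_sublist_of_reflTransGen {a b : List ℕ × List ℕ × List ℕ}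
    (h : Relation.ReflTransGen (FINStep n adj) a b) (hb : b.2.2 = []) :
    ∃ g, b.2.1 = a.2.1 ++ g ∧ a.2.2.Sublist g := by
  induction h using Relation.ReflTransGen.head_induction_on with
  | refl => exact ⟨[], by simp, by simp [hb]⟩
  | head hstep _ ih =>
    obtain ⟨g, hg, hs⟩ := ih
    cases hstep with
    | root => exact ⟨g, hg, List.nil_sublist g⟩
    | descend v t => exact ⟨g, hg, (List.sublist_cons_self v _).trans hs⟩
    | backtrack t => exact ⟨t :: g, by simpa using hg, hs.cons_cons t⟩

theorem exists_finishing_state_of_reflTransGen {a b : List ℕ × List ℕ × List ℕ}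
    (h : Relation.ReflTransGen (FINStep n adj) a b) {x : ℕ} (hxb : x ∈ b.2.1)
    (hxa : x ∉ a.2.1) :
    ∃ d f s, Relation.ReflTransGen (FINStep n adj) a (d, f, x :: s) ∧
      Relation.ReflTransGen (FINStep n adj) (d, f ++ [x], s) b := by
  induction h using Relation.ReflTransGen.head_induction_on with
  | refl => exact absurd hxb hxa
  | @head a' c hstep hrest ih =>
    by_cases hc : x ∈ c.2.1
    · cases hstep with
      | root | descend => exact absurd hc hxa
      | backtrack t disc fin stack =>
        obtain rfl : x = t := by simpa [hxa] using hc
        exact ⟨disc, fin, stack, .refl, hrest⟩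
    · obtain ⟨d, f, s, h1, h2⟩ := ih hc
      exact ⟨d, f, s, .head hstep h1, h2⟩

/-- The state of a run witnessing `ValidFIN` at the moment `v` finishes. -/
theorem exists_finishing_state {disc : List ℕ}
    (hrun : Relation.ReflTransGen (FINStep n adj) ([], [], []) (disc, List.range' 1 n, []))
    {v : ℕ} (hv : v ∈ List.range' 1 n) :
    ∃ d f s, Relation.ReflTransGen (FINStep n adj) ([], [], []) (d, f, v :: s) ∧
      (∀ x ∈ f, x < v) ∧ (∀ x ∈ List.range' 1 n, x < v → x ∈ f) ∧
      (v :: s).Pairwise (· < ·) := by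
  obtain ⟨d, f, s, hbefore, hafter⟩ := exists_finishing_state_of_reflTransGen hrun hv (by simp)
  obtain ⟨g, hg, hsg⟩ := exists_stack_sublist_of_reflTransGen hafter rfl
  simp only [List.append_assoc, List.singleton_append] at hg
  have hsorted : (f ++ v :: g).Pairwise (· < ·) := hg ▸ List.pairwise_lt_range' (s := 1) (n := n)
  obtain ⟨-, hvg, hfvg⟩ := List.pairwise_append.1 hsorted
  refine ⟨d, f, s, hbefore, fun x hx => hfvg x hx v (by simp), ?_, hvg.sublist (hsg.cons_cons v)⟩
  intro x hx hxv
  simp only [hg, List.mem_append, List.mem_cons] at hx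
  rcases hx with hx | rfl | hx
  · exact hx
  · exact absurd hxv (lt_irrefl x)
  · exact absurd ((List.pairwise_cons.1 hvg).1 x hx) (lt_asymm hxv)

theorem parFIN_le_of_adj {v x : ℕ} (hadj : adj x v) (hvx : v < x) : parFIN n adj v ≤ x := by
  rw [parFIN, if_pos ⟨x, hadj, hvx⟩]
  exact Nat.sInf_le ⟨hadj, hvx⟩

theorem not_finConflict (hG : IsGraphOn n adj) (hvalid : ValidFIN n adj) (v u w : ℕ) :
    ¬ FINConflict n adj v u w := by
  rintro ⟨hadj, hwv, hvu, hupar⟩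
  obtain ⟨disc, hrun⟩ := hvalid
  obtain ⟨-, hun, hw1, hwn, -⟩ := hG.2 u w hadj
  obtain ⟨d, f, s, hstate, hfv, hfin, hsorted⟩ :=
    exists_finishing_state hrun (v := v) (List.mem_range'_1.2 ⟨by omega, by omega⟩)
  obtain ⟨hdisc, hfin_or_stack, hchain⟩ := FINInvariant.of_reflTransGen hstate
  have hwf : w ∈ f := hfin w (List.mem_range'_1.2 ⟨hw1, by omega⟩) hwv
  have hus : u ∈ s := by
    rcases hfin_or_stack u (hdisc w hwf u (hG.1 hadj)) with huf | hus
    · exact absurd (hfv u huf) (lt_asymm hvu)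
    · exact (List.mem_cons.1 hus).resolve_left hvu.ne'
  obtain ⟨t, s', rfl⟩ := List.exists_cons_of_ne_nil (List.ne_nil_of_mem hus)
  have hvt : v < t := (List.pairwise_cons.1 hsorted).1 t (by simp)
  have htu : t ≤ u := by
    rcases List.mem_cons.1 hus with rfl | hus'
    · exact le_rfl
    · exact ((List.pairwise_cons.1 (List.pairwise_cons.1 hsorted).2).1 u hus').le
  have := parFIN_le_of_adj (n := n) (List.isChain_cons_cons.1 hchain).1 hvt
  omega

end FINRun

section ParentChain

theorem reflTransGen_of_forall_lt_le (p : ℕ → ℕ) {w u : ℕ}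
    (hp : ∀ v, w ≤ v → v < u → v < p v ∧ p v ≤ u) {v : ℕ} (hwv : w ≤ v) (hvu : v ≤ u) :
    Relation.ReflTransGen (fun a b => b = p a) v u := by
  rcases hvu.eq_or_lt with rfl | hlt
  · exact .refl
  · obtain ⟨hvp, hpu⟩ := hp v hwv hlt
    exact .head rfl (reflTransGen_of_forall_lt_le p hp (hwv.trans hvp.le) hpu)
termination_by u - v

variable {n : ℕ} {adj : ℕ → ℕ → Prop}

theorem lt_parFIN {v : ℕ} (hv : v ≤ n) : v < parFIN n adj v := by
  unfold parFIN
  split_ifs with h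
  · exact (Nat.sInf_mem h).2
  · omega

theorem reflTransGen_parFIN_of_adj (hG : IsGraphOn n adj)
    (hnc : ∀ v u w, ¬ FINConflict n adj v u w) {u w : ℕ} (hadj : adj u w) (hwu : w < u) :
    Relation.ReflTransGen (fun a b => b = parFIN n adj a) w u := by
  obtain ⟨-, hun, -⟩ := hG.2 u w hadj
  refine reflTransGen_of_forall_lt_le _ (fun v hwv hvu => ⟨lt_parFIN (by omega), ?_⟩) le_rfl hwu.le
  rcases hwv.eq_or_lt with rfl | hwv
  · exact parFIN_le_of_adj hadj hvu
  · exact not_lt.1 fun hupar => hnc v u w ⟨hadj, hwv, hvu, hupar⟩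

end ParentChain

/-- **no cross edges w.r.t. `T_FIN`.** Suppose the identity labelling of `G`
is a valid FIN numbering.  Consider the tree `T_FIN` on `{1,…,n} ∪ {∞}` (with `∞`
represented by the sentinel `n + 1`) rooted at `∞`, in which the parent of every vertex `v`
is `p_FIN(v)`.  Then for every edge `{u,w} ∈ E`, either `u` is an ancestor of `w` in
`T_FIN` or `w` is an ancestor of `u` (ancestry being the reflexive-transitive closure of
the child–parent relation). -/
theorem no_cross_edges (n : ℕ) (adj : ℕ → ℕ → Prop) (hG : IsGraphOn n adj)
    (hvalid : ValidFIN n adj) (u w : ℕ) (hadj : adj u w) :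
    Relation.ReflTransGen (fun a b => b = parFIN n adj a) w u ∨
    Relation.ReflTransGen (fun a b => b = parFIN n adj a) u w := by
  have hnc := not_finConflict hG hvalid
  obtain ⟨-, -, -, -, hne⟩ := hG.2 u w hadj
  rcases hne.lt_or_gt with huw | hwu
  · exact .inr (reflTransGen_parFIN_of_adj hG hnc (hG.1 hadj) huw)
  · exact .inl (reflTransGen_parFIN_of_adj hG hnc hadj hwu)
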